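/- Let X, Y, Z be Fréchet spaces and let d₁ : X → Y and d₂ : Y → Z be continuous linear maps with d₂ ∘ d₁ = 0 (so the range of d₁ is contained in the kernel of d₂). If the homology space (ker d₂) ⧸ (range d₁) is finite-dimensional over ℝ, then the range of d₁ is closed in Y, and consequently the quotient (ker d₂) ⧸ (range d₁), endowed with the quotient of the subspace topology of ker d₂ in Y, is a Hausdorff topological vector space. -/

import Mathlib

/-!
Write `K = ker d₂` and `B = range d₁ ⊆ K`. As `K` is closed in `Y`, it is a complete metrizable
topological vector space, hence a Baire space, and the open mapping theorem holds for continuous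
linear surjections onto it. For a finite-dimensional algebraic complement `C` of `B` in `K`, the map
`X × C → K, (x, c) ↦ d₁ x + c` is such a surjection, and the complement of `B` is the image of the
open set `{c ≠ 0}`. So `B` is closed in `K`, hence in `Y`, and `K ⧸ B` is Hausdorff.

The open mapping theorem is proved the classical way: by Baire, the closure of the image of a
neighbourhood of `0` is a neighbourhood of `0`, and successive approximation, summing a series in
the complete source, removes the closure.
-/

open Filter Set Topology Uniformity
open scoped Pointwise

theorem IsUniformAddGroup.baireSpace (G : Type*) [UniformSpace G] [AddGroup G]
    [IsUniformAddGroup G] [FirstCountableTopology G] [CompleteSpace G] : BaireSpace G := by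
  have : (𝓤 G).IsCountablyGenerated := by
    rw [uniformity_eq_comap_nhds_zero G]
    infer_instance
  infer_instance

theorem exists_antitoneBasis_nhds_zero_add_subset {G : Type*} [TopologicalSpace G]
    [AddZeroClass G] [ContinuousAdd G] [FirstCountableTopology G] {S : Set G} (hS : S ∈ 𝓝 0) :
    ∃ V : ℕ → Set G, (𝓝 (0 : G)).HasAntitoneBasis V ∧ V 0 + V 0 ⊆ S ∧
      ∀ n, V (n + 1) + V (n + 1) ⊆ V n := by
  obtain ⟨U, hU⟩ := (𝓝 (0 : G)).exists_antitone_basis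
  choose! half half_mem half_add using fun W (hW : W ∈ 𝓝 (0 : G)) => exists_nhds_zero_half hW
  -- Shrinking into `U n` at each step forces the `V n` to form a basis.
  let V : ℕ → Set G := fun n => Nat.rec (half S) (fun n Vn => half (Vn ∩ U n)) n
  have hnhds : ∀ n, V n ∈ 𝓝 0 := by
    intro n
    induction n with
    | zero => exact half_mem S hS
    | succ n ih => exact half_mem _ (inter_mem ih (hU.mem n))
  have hadd : ∀ n, V (n + 1) + V (n + 1) ⊆ V n ∩ U n := fun n =>
    add_subset_iff.2 (half_add _ (inter_mem (hnhds n) (hU.mem n)))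
  have hsucc : ∀ n, V (n + 1) ⊆ V n ∩ U n := fun n =>
    (subset_add_left _ (mem_of_mem_nhds (hnhds (n + 1)))).trans (hadd n)
  refine ⟨V, ⟨?_, antitone_nat_of_succ_le fun n => (hsucc n).trans inter_subset_left⟩,
    add_subset_iff.2 (half_add S hS), fun n => (hadd n).trans inter_subset_left⟩
  exact hU.toHasBasis.to_hasBasis (fun n _ => ⟨n + 1, trivial, fun x hx => (hsucc n hx).2⟩)
    fun n _ => hU.toHasBasis.mem_iff.1 (hnhds n)

theorem sum_Ico_mem_of_add_subset {M : Type*} [AddCommMonoid M] {V : ℕ → Set M}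
    (h0 : ∀ n, (0 : M) ∈ V n) (hV : ∀ n, V (n + 1) + V (n + 1) ⊆ V n) {x : ℕ → M}
    (hx : ∀ n, x n ∈ V (n + 1)) {m n : ℕ} (hmn : m ≤ n) : ∑ k ∈ Finset.Ico m n, x k ∈ V m := by
  obtain ⟨d, rfl⟩ := Nat.exists_eq_add_of_le hmn
  clear hmn
  induction d generalizing m with
  | zero => simpa using h0 m
  | succ d ih =>
    rw [Finset.sum_eq_sum_Ico_succ_bot (by omega), show m + (d + 1) = m + 1 + d by omega]
    exact hV m (add_mem_add (hx m) ih)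

theorem exists_tendsto_sum_range_of_add_subset {E : Type*} [UniformSpace E] [AddCommGroup E]
    [IsUniformAddGroup E] [CompleteSpace E] {V : ℕ → Set E}
    (hV : (𝓝 (0 : E)).HasAntitoneBasis V) (hadd : ∀ n, V (n + 1) + V (n + 1) ⊆ V n)
    {x : ℕ → E} (hx : ∀ n, x n ∈ V (n + 1)) :
    ∃ a ∈ closure (V 0), Tendsto (fun n => ∑ k ∈ Finset.range n, x k) atTop (𝓝 a) := by
  have hIco : ∀ {m n}, m ≤ n → ∑ k ∈ Finset.Ico m n, x k ∈ V m :=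
    sum_Ico_mem_of_add_subset (fun n => mem_of_mem_nhds (hV.mem n)) hadd hx
  have hcauchy : CauchySeq fun n => ∑ k ∈ Finset.range n, x k := by
    have hbasis := hV.toHasBasis.comap fun p : E × E => p.1 - p.2
    rw [← uniformity_eq_comap_nhds_zero_swapped] at hbasis
    exact hbasis.cauchySeq_iff'.2 fun m _ =>
      ⟨m, fun n hn => by simpa [Finset.sum_Ico_eq_sub x hn] using hIco hn⟩
  obtain ⟨a, ha⟩ := cauchySeq_tendsto_of_complete hcauchy
  refine ⟨a, mem_closure_of_tendsto ha (Eventually.of_forall fun n => ?_), ha⟩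
  simpa only [Finset.range_eq_Ico] using hIco (Nat.zero_le n)

namespace ContinuousLinearMap

section Topological

variable {E F : Type*}
  [AddCommGroup E] [Module ℝ E] [TopologicalSpace E]
  [AddCommGroup F] [Module ℝ F] [TopologicalSpace F] [IsTopologicalAddGroup F]

theorem closure_image_mem_nhds_zero [IsTopologicalAddGroup E] [ContinuousSMul ℝ E]
    [ContinuousConstSMul ℝ F] [BaireSpace F] (T : E →L[ℝ] F)
    (hT : Function.Surjective T) {U : Set E} (hU : U ∈ 𝓝 0) : closure (T '' U) ∈ 𝓝 0 := by
  obtain ⟨V, hV, hVU⟩ := exists_nhds_half_neg hU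
  set C := closure (T '' V)
  have hcover : ⋃ n : ℕ, ((n : ℝ) + 1) • C = univ := by
    refine eq_univ_of_forall fun y => ?_
    obtain ⟨x, rfl⟩ := hT y
    obtain ⟨r, -, hr⟩ := (absorbent_nhds_zero (𝕜 := ℝ) hV x).exists_pos
    obtain ⟨n, hn⟩ := exists_nat_ge r
    have hn' : r ≤ ‖(n : ℝ) + 1‖ := by
      rw [Real.norm_eq_abs, abs_of_pos (by positivity)]
      linarith
    obtain ⟨v, hv, rfl⟩ := hr _ hn' rfl
    exact mem_iUnion.2 ⟨n, T v, subset_closure (mem_image_of_mem T hv), (map_smul T _ _).symm⟩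
  obtain ⟨n, hn⟩ := nonempty_interior_of_iUnion_of_closed
    (fun n => isClosed_closure.smul_of_ne_zero (by positivity)) hcover
  rw [interior_smul₀ (by positivity)] at hn
  obtain ⟨y₀, hy₀⟩ := smul_set_nonempty.1 hn
  -- `C` contains a neighbourhood of `y₀`, so `C - C` contains a neighbourhood of `0`.
  have hy₀C : y₀ ∈ C := interior_subset hy₀
  rw [mem_interior_iff_mem_nhds, ← map_add_left_nhds_zero] at hy₀
  filter_upwards [hy₀] with z hz
  rw [← add_sub_cancel_left y₀ z]
  exact map_mem_closure₂ continuous_sub hz hy₀C fun _ ⟨a, ha, hTa⟩ _ ⟨b, hb, hTb⟩ =>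
    ⟨a - b, hVU a ha b hb, by rw [map_sub, hTa, hTb]⟩

theorem eq_zero_of_forall_mem_closure_image [T2Space F] (T : E →L[ℝ] F) {V : ℕ → Set E}
    (hV : (𝓝 (0 : E)).HasAntitoneBasis V) {z : F} (hz : ∀ n, z ∈ closure (T '' V n)) :
    z = 0 := by
  by_contra hz0
  obtain ⟨W, ⟨hW, hWclosed⟩, hzW⟩ := (closed_nhds_basis (0 : F)).mem_iff.1
    (isOpen_compl_singleton.mem_nhds (Ne.symm hz0))
  obtain ⟨n, -, hn⟩ := hV.toHasBasis.mem_iff.1 (T.continuous.tendsto' 0 0 (map_zero T) hW)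
  exact hzW (closure_minimal (image_subset_iff.2 hn) hWclosed (hz n)) rfl

end Topological

section Complete

variable {E F : Type*}
  [AddCommGroup E] [Module ℝ E] [UniformSpace E] [IsUniformAddGroup E] [ContinuousSMul ℝ E]
  [FirstCountableTopology E] [CompleteSpace E]
  [AddCommGroup F] [Module ℝ F] [TopologicalSpace F] [IsTopologicalAddGroup F]
  [ContinuousConstSMul ℝ F] [T2Space F] [BaireSpace F]

theorem image_mem_nhds_zero (T : E →L[ℝ] F) (hT : Function.Surjective T) {S : Set E}
    (hS : S ∈ 𝓝 0) : T '' S ∈ 𝓝 0 := by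
  obtain ⟨V, hV, hV0, hadd⟩ := exists_antitoneBasis_nhds_zero_add_subset hS
  set C : ℕ → Set F := fun n => closure (T '' V n)
  have hC : ∀ n, C n ∈ 𝓝 0 := fun n => T.closure_image_mem_nhds_zero hT (hV.mem n)
  have hC_anti : Antitone C := fun _ _ h => closure_mono (image_mono (hV.antitone h))
  have hstep : ∀ n, ∀ q ∈ C (n + 1), ∃ x ∈ V (n + 1), q - T x ∈ C (n + 2) := by
    intro n q hq
    have : (q - ·) ⁻¹' C (n + 2) ∈ 𝓝 q :=
      (continuous_const.sub continuous_id).continuousAt.preimage_mem_nhds (by simpa using hC _)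
    obtain ⟨_, hqx, x, hx, rfl⟩ := mem_closure_iff_nhds.1 hq _ this
    exact ⟨x, hx, hqx⟩
  choose! next next_mem next_sub using hstep
  refine mem_of_superset (hC 1) fun y hy => ?_
  let r : ℕ → F := fun n => Nat.rec y (fun n q => q - T (next n q)) n
  have hr : ∀ n, r n ∈ C (n + 1) := by
    intro n
    induction n with
    | zero => exact hy
    | succ n ih => exact next_sub n _ ih
  set x : ℕ → E := fun n => next n (r n)
  have hr_eq : ∀ n, r n = y - T (∑ k ∈ Finset.range n, x k) := by
    intro n
    induction n with
    | zero => simp [r]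
    | succ n ih => rw [Finset.sum_range_succ, map_add, sub_add_eq_sub_sub, ← ih]
  obtain ⟨a, haV, ha⟩ :=
    exists_tendsto_sum_range_of_add_subset hV hadd fun n => next_mem n _ (hr n)
  have hlim : ∀ m, y - T a ∈ C m := fun m =>
    isClosed_closure.mem_of_tendsto (tendsto_const_nhds.sub ((T.continuous.tendsto a).comp ha))
      ((eventually_ge_atTop m).mono fun n hn => hr_eq n ▸ hC_anti (by omega) (hr n))
  exact ⟨a, hV0 (closure_subset_add_self_of_mem_nhds_zero (hV.mem 0) haV),
    (sub_eq_zero.1 (T.eq_zero_of_forall_mem_closure_image hV hlim)).symm⟩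

theorem isOpenMap_of_surjective (T : E →L[ℝ] F) (hT : Function.Surjective T) : IsOpenMap T :=
  IsTopologicalAddGroup.isOpenMap_iff_nhds_zero.2 fun _ hS =>
    mem_of_superset (T.image_mem_nhds_zero hT hS) (image_preimage_subset T _)

end Complete

theorem isClosed_range_of_finiteDimensional_quotient {E F : Type*}
    [AddCommGroup E] [Module ℝ E] [UniformSpace E] [IsUniformAddGroup E] [ContinuousSMul ℝ E]
    [FirstCountableTopology E] [CompleteSpace E]
    [AddCommGroup F] [Module ℝ F] [UniformSpace F] [IsUniformAddGroup F] [ContinuousSMul ℝ F]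
    [FirstCountableTopology F] [T2Space F] [CompleteSpace F]
    (f : E →L[ℝ] F) [FiniteDimensional ℝ (F ⧸ LinearMap.range (f : E →ₗ[ℝ] F))] :
    IsClosed (LinearMap.range (f : E →ₗ[ℝ] F) : Set F) := by
  have := IsUniformAddGroup.baireSpace F
  obtain ⟨C, hC⟩ := (LinearMap.range (f : E →ₗ[ℝ] F)).exists_isCompl
  have : FiniteDimensional ℝ C := (Submodule.quotientEquivOfIsCompl _ C hC).finiteDimensional
  have : IsUniformAddGroup C := C.toAddSubgroup.isUniformAddGroup
  have : CompleteSpace C := FiniteDimensional.complete ℝ C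
  have : FirstCountableTopology C := IsInducing.subtypeVal.firstCountableTopology
  set S : E × C →L[ℝ] F := f.coprod C.subtypeL
  have hS : Function.Surjective S := fun y => by
    obtain ⟨_, ⟨x, rfl⟩, c, hc, hy⟩ := Submodule.mem_sup.1 (hC.sup_eq_top ▸ Submodule.mem_top)
    exact ⟨(x, ⟨c, hc⟩), hy⟩
  have hS_mem : ∀ x c, S (x, c) ∈ LinearMap.range (f : E →ₗ[ℝ] F) ↔ c = 0 := fun x c => by
    have hfx : f x ∈ LinearMap.range (f : E →ₗ[ℝ] F) := ⟨x, rfl⟩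
    rw [coprod_apply, Submodule.add_mem_iff_right _ hfx]
    exact ⟨fun hc => Subtype.ext (Submodule.disjoint_def.1 hC.disjoint _ hc c.2),
      fun hc => hc ▸ zero_mem _⟩
  have hcompl : (LinearMap.range (f : E →ₗ[ℝ] F) : Set F)ᶜ = S '' {q | q.2 ≠ 0} := by
    ext y
    obtain ⟨⟨x, c⟩, rfl⟩ := hS y
    refine ⟨fun hy => ⟨(x, c), fun hc => hy ((hS_mem x c).2 hc), rfl⟩, ?_⟩
    rintro ⟨⟨x', c'⟩, hc', hS_eq⟩ hmem
    exact hc' ((hS_mem x' c').1 (hS_eq ▸ hmem))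
  rw [← isOpen_compl_iff, hcompl]
  exact S.isOpenMap_of_surjective hS _ (isOpen_ne_fun continuous_snd continuous_const)

end ContinuousLinearMap

theorem homology_hausdorff_of_finiteDimensional_general
    {X Y Z : Type*}
    [AddCommGroup X] [Module ℝ X] [UniformSpace X] [IsUniformAddGroup X]
    [ContinuousSMul ℝ X]
    [TopologicalSpace.MetrizableSpace X] [CompleteSpace X]
    [AddCommGroup Y] [Module ℝ Y] [UniformSpace Y] [IsUniformAddGroup Y]
    [ContinuousSMul ℝ Y]
    [TopologicalSpace.MetrizableSpace Y] [CompleteSpace Y]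
    [AddCommGroup Z] [Module ℝ Z] [UniformSpace Z]
    [T2Space Z]
    (d₁ : X →L[ℝ] Y) (d₂ : Y →L[ℝ] Z)
    (hcomp : d₂.comp d₁ = 0)
    (h : FiniteDimensional ℝ
      ((LinearMap.ker (d₂ : Y →ₗ[ℝ] Z)) ⧸
        (LinearMap.range (d₁ : X →ₗ[ℝ] Y)).comap
          (LinearMap.ker (d₂ : Y →ₗ[ℝ] Z)).subtype)) :
    IsClosed (LinearMap.range (d₁ : X →ₗ[ℝ] Y) : Set Y) ∧
    T2Space
      ((LinearMap.ker (d₂ : Y →ₗ[ℝ] Z)) ⧸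
        (LinearMap.range (d₁ : X →ₗ[ℝ] Y)).comap
          (LinearMap.ker (d₂ : Y →ₗ[ℝ] Z)).subtype) := by
  set K := LinearMap.ker (d₂ : Y →ₗ[ℝ] Z)
  have hK : IsClosed (K : Set Y) := d₂.isClosed_ker
  have : IsUniformAddGroup K := K.toAddSubgroup.isUniformAddGroup
  have : CompleteSpace K := hK.completeSpace_coe
  have : FirstCountableTopology K := IsInducing.subtypeVal.firstCountableTopology
  have hd₁ : ∀ x, d₁ x ∈ K := fun x => congr($hcomp x)
  set d₁' : X →L[ℝ] K := d₁.codRestrict K hd₁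
  have hrange : LinearMap.range (d₁' : X →ₗ[ℝ] K) =
      (LinearMap.range (d₁ : X →ₗ[ℝ] Y)).comap K.subtype :=
    LinearMap.range_codRestrict K _ hd₁
  have : FiniteDimensional ℝ (K ⧸ LinearMap.range (d₁' : X →ₗ[ℝ] K)) := hrange ▸ h
  have hclosed : IsClosed ((LinearMap.range (d₁ : X →ₗ[ℝ] Y)).comap K.subtype : Set K) :=
    hrange ▸ d₁'.isClosed_range_of_finiteDimensional_quotient
  have hle : LinearMap.range (d₁ : X →ₗ[ℝ] Y) ≤ K := fun _ ⟨x, hx⟩ => hx ▸ hd₁ x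
  refine ⟨?_, have := hclosed; inferInstance⟩
  rw [← inf_eq_right.2 hle, ← Submodule.map_comap_subtype, Submodule.map_coe]
  exact hK.isClosedEmbedding_subtypeVal.isClosedMap _ hclosed

/-- Let `X`, `Y`, `Z` be Fréchet spaces (locally convex, metrizable, Hausdorff,
complete topological vector spaces over ℝ), and `d₁ : X → Y`, `d₂ : Y → Z`
continuous linear maps with `d₂ ∘ d₁ = 0`.  If the homology
`ker d₂ ⧸ range d₁` is finite-dimensional over ℝ, then the range of `d₁` is
closed in `Y`, and the homology, with the quotient of the subspace topology
on `ker d₂`, is Hausdorff. -/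
theorem homology_hausdorff_of_finiteDimensional
    {X Y Z : Type*}
    [AddCommGroup X] [Module ℝ X] [UniformSpace X] [IsUniformAddGroup X]
    [ContinuousSMul ℝ X] [LocallyConvexSpace ℝ X]
    [TopologicalSpace.MetrizableSpace X] [T2Space X] [CompleteSpace X]
    [AddCommGroup Y] [Module ℝ Y] [UniformSpace Y] [IsUniformAddGroup Y]
    [ContinuousSMul ℝ Y] [LocallyConvexSpace ℝ Y]
    [TopologicalSpace.MetrizableSpace Y] [T2Space Y] [CompleteSpace Y]
    [AddCommGroup Z] [Module ℝ Z] [UniformSpace Z] [IsUniformAddGroup Z]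
    [ContinuousSMul ℝ Z] [LocallyConvexSpace ℝ Z]
    [TopologicalSpace.MetrizableSpace Z] [T2Space Z] [CompleteSpace Z]
    (d₁ : X →L[ℝ] Y) (d₂ : Y →L[ℝ] Z)
    (hcomp : d₂.comp d₁ = 0)
    (h : FiniteDimensional ℝ
      ((LinearMap.ker (d₂ : Y →ₗ[ℝ] Z)) ⧸
        (LinearMap.range (d₁ : X →ₗ[ℝ] Y)).comap
          (LinearMap.ker (d₂ : Y →ₗ[ℝ] Z)).subtype)) :
    IsClosed (LinearMap.range (d₁ : X →ₗ[ℝ] Y) : Set Y) ∧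
    T2Space
      ((LinearMap.ker (d₂ : Y →ₗ[ℝ] Z)) ⧸
        (LinearMap.range (d₁ : X →ₗ[ℝ] Y)).comap
          (LinearMap.ker (d₂ : Y →ₗ[ℝ] Z)).subtype) :=
  homology_hausdorff_of_finiteDimensional_general d₁ d₂ hcomp h
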